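/- L² convergence of the MLMF estimator: for each k ∈ ℕ let N_1(k) ≥ N_2(k) ≥ ⋯ ≥ N_L(k) ≥ 1 be nested sample sizes with N_l(k) → ∞ as k → ∞ for every l, and let Y*_k be the coupled MLMF estimator with the optimal coefficients a_l* = ρ_{l,L} σ_L / σ_l and sample sizes N_l(k). Then E[(Y*_k − E[Z_1[L]])²] → 0 as k → ∞, i.e. Y*_k converges in mean square to the quantity of interest E[Z_1[L]]. -/

import Mathlib

/-!
By the L² law of large numbers each centred sample mean `P_l^{(n)} - E[Z_1[l]]` tends to `0` in
L² as `n → ∞`, in particular along `n = N_l(k)` and `n = N_{l+1}(k)`. The level means cancel in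
every correction term `P_l^{(N_l)} - P_l^{(N_{l+1})}`, so `Y - E[Z_1[L]]` is a fixed linear
combination of such centred sample means; by Minkowski's inequality its L² norm tends to `0`,
and the mean-square error is the square of that norm.
-/

open MeasureTheory ProbabilityTheory Finset Filter

/-- Sample mean of the first `n` samples of the sequence `X`. -/
noncomputable def sampleMean {Ω : Type} (n : ℕ) (X : ℕ → Ω → ℝ) : Ω → ℝ :=
  fun ω => (n : ℝ)⁻¹ * ∑ j ∈ Finset.range n, X j ω

/-- Covariance of two real random variables. -/
noncomputable def covar {Ω : Type} [MeasurableSpace Ω] (μ : Measure Ω) (X Y : Ω → ℝ) : ℝ :=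
  ∫ ω, (X ω - μ[X]) * (Y ω - μ[Y]) ∂μ

open scoped ENNReal Topology

section LpNorm

variable {ι α E : Type*} [MeasurableSpace α] {μ : Measure α} [NormedAddCommGroup E]
  {p : ℝ≥0∞} {l : Filter ι}

lemma integral_sq_eq_lpNorm_sq {f : α → ℝ} (hf : AEStronglyMeasurable f μ) :
    ∫ x, f x ^ 2 ∂μ = lpNorm f 2 μ ^ 2 := by
  have h := lpNorm_nnreal_eq_integral_norm_rpow (p := 2) two_ne_zero hf
  simp only [ENNReal.coe_ofNat, NNReal.coe_ofNat, Real.rpow_two, Real.norm_eq_abs, sq_abs] at h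
  rw [h]
  exact (Real.rpow_inv_natCast_pow (integral_nonneg fun x => sq_nonneg (f x)) two_ne_zero).symm

lemma tendsto_lpNorm_add (hp : 1 ≤ p) {f g : ι → α → E} (hf : ∀ i, MemLp (f i) p μ)
    (hf0 : Tendsto (fun i => lpNorm (f i) p μ) l (𝓝 0))
    (hg0 : Tendsto (fun i => lpNorm (g i) p μ) l (𝓝 0)) :
    Tendsto (fun i => lpNorm (f i + g i) p μ) l (𝓝 0) :=
  squeeze_zero (fun _ => lpNorm_nonneg) (fun i => lpNorm_add_le (hf i) hp)
    (by simpa using hf0.add hg0)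

lemma tendsto_lpNorm_sub (hp : 1 ≤ p) {f g : ι → α → E} (hf : ∀ i, MemLp (f i) p μ)
    (hf0 : Tendsto (fun i => lpNorm (f i) p μ) l (𝓝 0))
    (hg0 : Tendsto (fun i => lpNorm (g i) p μ) l (𝓝 0)) :
    Tendsto (fun i => lpNorm (f i - g i) p μ) l (𝓝 0) :=
  squeeze_zero (fun _ => lpNorm_nonneg) (fun i => lpNorm_sub_le (hf i) hp)
    (by simpa using hf0.add hg0)

lemma tendsto_lpNorm_const_smul {𝕜 : Type*} [NormedField 𝕜] [NormedSpace 𝕜 E] (c : 𝕜)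
    {f : ι → α → E} (hf0 : Tendsto (fun i => lpNorm (f i) p μ) l (𝓝 0)) :
    Tendsto (fun i => lpNorm (c • f i) p μ) l (𝓝 0) := by
  simpa [lpNorm_const_smul] using hf0.const_mul (‖c‖₊ : ℝ)

lemma tendsto_lpNorm_finset_sum {κ : Type*} (s : Finset κ) (hp : 1 ≤ p) {f : κ → ι → α → E}
    (hf : ∀ j ∈ s, ∀ i, MemLp (f j i) p μ)
    (hf0 : ∀ j ∈ s, Tendsto (fun i => lpNorm (f j i) p μ) l (𝓝 0)) :
    Tendsto (fun i => lpNorm (∑ j ∈ s, f j i) p μ) l (𝓝 0) :=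
  squeeze_zero (fun _ => lpNorm_nonneg) (fun i => lpNorm_sum_le (fun j hj => hf j hj i) hp)
    (by simpa using tendsto_finsetSum s hf0)

end LpNorm

section SampleMean

variable {Ω : Type} [MeasurableSpace Ω] {p : ℝ≥0∞} {X : ℕ → Ω → ℝ}

noncomputable def centeredSampleMean (μ : Measure Ω) (n : ℕ) (X : ℕ → Ω → ℝ) : Ω → ℝ :=
  fun ω => sampleMean n X ω - μ[X 0]

variable {μ : Measure Ω}

lemma memLp_sampleMean (hX : ∀ j, MemLp (X j) p μ) (n : ℕ) : MemLp (sampleMean n X) p μ :=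
  (memLp_finsetSum _ fun j _ => hX j).const_mul _

lemma memLp_centeredSampleMean [IsFiniteMeasure μ] (hX : ∀ j, MemLp (X j) p μ) (n : ℕ) :
    MemLp (centeredSampleMean μ n X) p μ :=
  (memLp_sampleMean hX n).sub (memLp_const _)

theorem tendsto_lpNorm_centeredSampleMean (hp : 1 ≤ p) (hp' : p ≠ ∞)
    (hX : MemLp (X 0) p μ) (hindep : Pairwise fun i j => X i ⟂ᵢ[μ] X j)
    (hident : ∀ j, IdentDistrib (X j) (X 0) μ μ) :
    Tendsto (fun n => lpNorm (centeredSampleMean μ n X) p μ) atTop (𝓝 0) := by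
  have hmeas (n : ℕ) : AEStronglyMeasurable (centeredSampleMean μ n X) μ :=
    (memLp_sampleMean (fun j => (hident j).symm.memLp_snd hX) n).aestronglyMeasurable.sub
      aestronglyMeasurable_const
  simp_rw [← toReal_eLpNorm (hmeas _)]
  exact (ENNReal.tendsto_toReal ENNReal.zero_ne_top).comp (strong_law_Lp hp hp' X hX hindep hident)

end SampleMean

lemma succ_mem_Icc_of_mem_Icc_pred {L l : ℕ} (hl : l ∈ Icc 1 (L - 1)) :
    l ∈ Icc 1 L ∧ l + 1 ∈ Icc 1 L := by
  simp only [mem_Icc] at hl ⊢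
  omega

section MultilevelCombination

variable {α E : Type*} [MeasurableSpace α] {μ : Measure α} [NormedAddCommGroup E]
  [NormedSpace ℝ E] {p : ℝ≥0∞}

def mlmfCombination (L : ℕ) (a : ℕ → ℝ) (G : ℕ → ℕ → α → E) (n : ℕ → ℕ) : α → E :=
  G L (n L) + ∑ l ∈ Icc 1 (L - 1), a l • (G l (n l) - G l (n (l + 1)))

variable {L : ℕ} {G : ℕ → ℕ → α → E}

lemma memLp_mlmfCombination (hL : 1 ≤ L) (a : ℕ → ℝ)
    (hG : ∀ l ∈ Icc 1 L, ∀ n, MemLp (G l n) p μ) (n : ℕ → ℕ) :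
    MemLp (mlmfCombination L a G n) p μ := by
  refine (hG L (mem_Icc.2 ⟨hL, le_rfl⟩) _).add (memLp_finsetSum' _ fun l hl => ?_)
  have hl := (succ_mem_Icc_of_mem_Icc_pred hl).1
  exact ((hG l hl _).sub (hG l hl _)).const_smul _

lemma tendsto_lpNorm_mlmfCombination {ι : Type*} {u : Filter ι} (hp : 1 ≤ p) (hL : 1 ≤ L)
    (a : ℕ → ℝ) (hG : ∀ l ∈ Icc 1 L, ∀ n, MemLp (G l n) p μ)
    (hG0 : ∀ l ∈ Icc 1 L, Tendsto (fun n => lpNorm (G l n) p μ) atTop (𝓝 0))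
    {N : ι → ℕ → ℕ} (hN : ∀ l ∈ Icc 1 L, Tendsto (fun k => N k l) u atTop) :
    Tendsto (fun k => lpNorm (mlmfCombination L a G (N k)) p μ) u (𝓝 0) := by
  have hL : L ∈ Icc 1 L := mem_Icc.2 ⟨hL, le_rfl⟩
  refine tendsto_lpNorm_add hp (fun k => hG L hL _) ((hG0 L hL).comp (hN L hL))
    (tendsto_lpNorm_finset_sum _ hp (fun l hl k => ?_) fun l hl => ?_)
  all_goals obtain ⟨hl, hl'⟩ := succ_mem_Icc_of_mem_Icc_pred hl
  · exact ((hG l hl _).sub (hG l hl _)).const_smul _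
  · exact tendsto_lpNorm_const_smul _ <| tendsto_lpNorm_sub hp (fun k => hG l hl _)
      ((hG0 l hl).comp (hN l hl)) ((hG0 l hl).comp (hN (l + 1) hl'))

end MultilevelCombination

theorem stmt_17_general
    {Ω : Type} [MeasurableSpace Ω] (μ : Measure Ω) [IsProbabilityMeasure μ]
    (L : ℕ) (hL : 1 ≤ L)
    (Z : ℕ → Ω → ℕ → ℝ)
    (hindep : iIndepFun Z μ)
    (hident : ∀ j, IdentDistrib (Z j) (Z 0) μ μ)
    (hL2 : ∀ j, ∀ l ∈ Finset.Icc 1 L, MemLp (fun ω => Z j ω l) 2 μ)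
    (σ ρ : ℕ → ℝ)
    (N : ℕ → ℕ → ℕ)
    (hNtop : ∀ l ∈ Finset.Icc 1 L, Tendsto (fun k => N k l) atTop atTop) :
    Tendsto (fun k =>
        ∫ ω, (sampleMean (N k L) (fun j ω' => Z j ω' L) ω
          + (∑ l ∈ Finset.Icc 1 (L - 1),
              (ρ l * σ L / σ l) * (sampleMean (N k l) (fun j ω' => Z j ω' l) ω
                - sampleMean (N k (l + 1)) (fun j ω' => Z j ω' l) ω))
          - μ[fun ω' => Z 0 ω' L]) ^ 2 ∂μ)
      atTop (nhds 0) := by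
  let G (l n : ℕ) : Ω → ℝ := centeredSampleMean μ n (fun j ω => Z j ω l)
  have hG_memLp : ∀ l ∈ Icc 1 L, ∀ n, MemLp (G l n) 2 μ := fun l hl =>
    memLp_centeredSampleMean fun j => hL2 j l hl
  have hG_lim : ∀ l ∈ Icc 1 L, Tendsto (fun n => lpNorm (G l n) 2 μ) atTop (𝓝 0) := fun l hl =>
    tendsto_lpNorm_centeredSampleMean one_le_two ENNReal.ofNat_ne_top (hL2 0 l hl)
      (fun i j hij => (hindep.indepFun hij).comp (measurable_pi_apply l) (measurable_pi_apply l))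
      (fun j => (hident j).comp (measurable_pi_apply l))
  have hY_eq : ∀ k ω, sampleMean (N k L) (fun j ω' => Z j ω' L) ω
      + (∑ l ∈ Finset.Icc 1 (L - 1),
          (ρ l * σ L / σ l) * (sampleMean (N k l) (fun j ω' => Z j ω' l) ω
            - sampleMean (N k (l + 1)) (fun j ω' => Z j ω' l) ω))
      - μ[fun ω' => Z 0 ω' L] = mlmfCombination L (fun l => ρ l * σ L / σ l) G (N k) ω := by
    intro k ω
    simp only [mlmfCombination, G, centeredSampleMean, Pi.add_apply, Finset.sum_apply,
      Pi.smul_apply, Pi.sub_apply, sub_sub_sub_cancel_right, smul_eq_mul]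
    ring
  simp_rw [hY_eq, integral_sq_eq_lpNorm_sq
    (memLp_mlmfCombination hL _ hG_memLp _).aestronglyMeasurable]
  simpa using (tendsto_lpNorm_mlmfCombination one_le_two hL _ hG_memLp hG_lim hNtop).pow 2

/-- L² convergence of the MLMF estimator: for each `k ∈ ℕ` let
`N_1(k) ≥ ⋯ ≥ N_L(k) ≥ 1` be nested sample sizes with `N_l(k) → ∞` as `k → ∞` for every
`l`, and let `Y*_k` be the coupled MLMF estimator with the optimal coefficients
`a_l* = ρ_{l,L} σ_L / σ_l` and sample sizes `N_l(k)`.  Then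
`E[(Y*_k − E[Z_1[L]])²] → 0`, i.e. `Y*_k` converges in mean square to `E[Z_1[L]]`. -/
theorem stmt_17
    {Ω : Type} [MeasurableSpace Ω] (μ : Measure Ω) [IsProbabilityMeasure μ]
    (L : ℕ) (hL : 1 ≤ L)
    (Z : ℕ → Ω → ℕ → ℝ)
    (hmeas : ∀ j, Measurable (Z j))
    (hindep : iIndepFun Z μ)
    (hident : ∀ j, IdentDistrib (Z j) (Z 0) μ μ)
    (hL2 : ∀ j, ∀ l ∈ Finset.Icc 1 L, MemLp (fun ω => Z j ω l) 2 μ)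
    (σ ρ : ℕ → ℝ)
    (hσ : ∀ l ∈ Finset.Icc 1 L, σ l = Real.sqrt (variance (fun ω => Z 0 ω l) μ))
    (hσpos : ∀ l ∈ Finset.Icc 1 L, 0 < σ l)
    (hρ : ∀ l ∈ Finset.Icc 1 L,
      ρ l = covar μ (fun ω => Z 0 ω l) (fun ω => Z 0 ω L) / (σ l * σ L))
    (N : ℕ → ℕ → ℕ)
    (hNnest : ∀ k, ∀ l ∈ Finset.Icc 1 (L - 1), N k (l + 1) ≤ N k l)
    (hNLpos : ∀ k, 1 ≤ N k L)
    (hNtop : ∀ l ∈ Finset.Icc 1 L, Tendsto (fun k => N k l) atTop atTop) :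
    Tendsto (fun k =>
        ∫ ω, (sampleMean (N k L) (fun j ω' => Z j ω' L) ω
          + (∑ l ∈ Finset.Icc 1 (L - 1),
              (ρ l * σ L / σ l) * (sampleMean (N k l) (fun j ω' => Z j ω' l) ω
                - sampleMean (N k (l + 1)) (fun j ω' => Z j ω' l) ω))
          - μ[fun ω' => Z 0 ω' L]) ^ 2 ∂μ)
      atTop (nhds 0) :=
  stmt_17_general μ L hL Z hindep hident hL2 σ ρ N hNtop
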